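/- arXiv:2211.12765 — 4 statements merged into one kernel-verified Lean document; each statement's English description precedes it below -/
import Mathlib

section
/- Theorem 5.1 (observability criterion): The SLS under logically generated switching is observable if and only if there exist T ≥ 1 and a logical input sequence γ : Fin T → Fin M such that for every initial logical state α ∈ Fin N, letting σ be the switching-signal sequence generated from α by γ, the submodule ⨆_{t = 0}^{T−1} LinearMap.range (Matrix.mulVecLin ((A (σ 0))ᵀ * (A (σ 1))ᵀ * ⋯ * (A (σ (t−1)))ᵀ * (C (σ t))ᵀ)) of (Fin n → ℝ) equals ⊤ (for t = 0 the product is just (C (σ 0))ᵀ). -/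
open Matrix

/-- Extension of a finite sequence `γ : Fin T → α` (with `T ≥ 1`) to `ℕ`,
agreeing with `γ` on `t < T`. -/
def extSeq {α : Type*} {T : ℕ} (hT : 0 < T) (γ : Fin T → α) : ℕ → α :=
  fun t => γ ⟨min t (T - 1), by omega⟩

/-- The logical state sequence generated from `θ₀` by the logical inputs `γ`:
`θ 0 = θ₀`, `θ (t+1) = L (γ t) (θ t)`. -/
def logicState {N M : ℕ} (L : Fin M → Fin N → Fin N) (θ₀ : Fin N)
    (γ : ℕ → Fin M) : ℕ → Fin N
  | 0 => θ₀
  | t + 1 => L (γ t) (logicState L θ₀ γ t)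

/-- The switching signal generated from `θ₀` by the logical inputs `γ`:
`σ t = R (γ t) (θ t)`. -/
def switchSig {q N M : ℕ} (L : Fin M → Fin N → Fin N) (R : Fin M → Fin N → Fin q)
    (θ₀ : Fin N) (γ : ℕ → Fin M) : ℕ → Fin q :=
  fun t => R (γ t) (logicState L θ₀ γ t)

/-- The state trajectory of the switched linear system:
`x 0 = x₀`, `x (t+1) = A (σ t) *ᵥ x t + B (σ t) *ᵥ u t`. -/
def traj {n m q : ℕ} (A : Fin q → Matrix (Fin n) (Fin n) ℝ)
    (B : Fin q → Matrix (Fin n) (Fin m) ℝ) (σ : ℕ → Fin q)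
    (u : ℕ → Fin m → ℝ) (x₀ : Fin n → ℝ) : ℕ → Fin n → ℝ
  | 0 => x₀
  | t + 1 => (A (σ t)).mulVec (traj A B σ u x₀ t) + (B (σ t)).mulVec (u t)

/-- `transMat A σ s t = A (σ (t-1)) * A (σ (t-2)) * ⋯ * A (σ s)` for `s ≤ t`
(and `1` when `t ≤ s`). -/
def transMat {n q : ℕ} (A : Fin q → Matrix (Fin n) (Fin n) ℝ) (σ : ℕ → Fin q)
    (s : ℕ) : ℕ → Matrix (Fin n) (Fin n) ℝ
  | 0 => 1
  | t + 1 => if s ≤ t then A (σ t) * transMat A σ s t else 1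

/-- Reachability of the SLS under logically generated switching. -/
def ReachableSLS {n m q N M : ℕ} (A : Fin q → Matrix (Fin n) (Fin n) ℝ)
    (B : Fin q → Matrix (Fin n) (Fin m) ℝ) (L : Fin M → Fin N → Fin N)
    (R : Fin M → Fin N → Fin q) : Prop :=
  ∀ (x : Fin n → ℝ) (θ₀ : Fin N), ∃ T : ℕ, ∃ hT : 1 ≤ T, ∃ γ : Fin T → Fin M,
    ∃ u : Fin T → (Fin m → ℝ),
      traj A B (switchSig L R θ₀ (extSeq hT γ)) (extSeq hT u) 0 T = x

/-- Controllability of the SLS under logically generated switching. -/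
def ControllableSLS {n m q N M : ℕ} (A : Fin q → Matrix (Fin n) (Fin n) ℝ)
    (B : Fin q → Matrix (Fin n) (Fin m) ℝ) (L : Fin M → Fin N → Fin N)
    (R : Fin M → Fin N → Fin q) : Prop :=
  ∀ x : Fin n → ℝ, ∃ T : ℕ, ∃ hT : 1 ≤ T, ∃ γ : Fin T → Fin M,
    ∀ θ₀ : Fin N, ∃ u : Fin T → (Fin m → ℝ),
      traj A B (switchSig L R θ₀ (extSeq hT γ)) (extSeq hT u) x T = 0

/-- Observability of the SLS under logically generated switching. -/
def ObservableSLS {n m p q N M : ℕ} (A : Fin q → Matrix (Fin n) (Fin n) ℝ)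
    (B : Fin q → Matrix (Fin n) (Fin m) ℝ) (C : Fin q → Matrix (Fin p) (Fin n) ℝ)
    (L : Fin M → Fin N → Fin N) (R : Fin M → Fin N → Fin q) : Prop :=
  ∃ T : ℕ, ∃ hT : 1 ≤ T, ∃ γ : Fin T → Fin M,
    ∀ (θ₀ : Fin N) (u : Fin T → (Fin m → ℝ)) (x₀ x₀' : Fin n → ℝ),
      (∀ t < T,
          (C (switchSig L R θ₀ (extSeq hT γ) t)).mulVec
            (traj A B (switchSig L R θ₀ (extSeq hT γ)) (extSeq hT u) x₀ t) =
          (C (switchSig L R θ₀ (extSeq hT γ) t)).mulVec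
            (traj A B (switchSig L R θ₀ (extSeq hT γ)) (extSeq hT u) x₀' t)) →
        x₀ = x₀'

/-- Reconstructibility of the SLS under logically generated switching. -/
def ReconstructibleSLS {n m p q N M : ℕ} (A : Fin q → Matrix (Fin n) (Fin n) ℝ)
    (B : Fin q → Matrix (Fin n) (Fin m) ℝ) (C : Fin q → Matrix (Fin p) (Fin n) ℝ)
    (L : Fin M → Fin N → Fin N) (R : Fin M → Fin N → Fin q) : Prop :=
  ∃ T : ℕ, ∃ hT : 1 ≤ T, ∃ γ : Fin T → Fin M,
    ∀ (θ₀ : Fin N) (u : Fin T → (Fin m → ℝ)) (x₀ x₀' : Fin n → ℝ),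
      (∀ t < T,
          (C (switchSig L R θ₀ (extSeq hT γ) t)).mulVec
            (traj A B (switchSig L R θ₀ (extSeq hT γ)) (extSeq hT u) x₀ t) =
          (C (switchSig L R θ₀ (extSeq hT γ) t)).mulVec
            (traj A B (switchSig L R θ₀ (extSeq hT γ)) (extSeq hT u) x₀' t)) →
        traj A B (switchSig L R θ₀ (extSeq hT γ)) (extSeq hT u) x₀ T =
          traj A B (switchSig L R θ₀ (extSeq hT γ)) (extSeq hT u) x₀' T

/-! Observability means that the output map `x₀ ↦ (C (σ t) * Φ(t, 0) x₀)_{t < T}`, with `Φ` the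
transition matrices, is injective for every switching signal the input word generates: the
controls cancel in the difference of two trajectories. Injectivity of a finite family of
matrices is equivalent, by duality, to their transposes jointly spanning the whole space. -/

namespace Matrix

variable {K m n : Type*} [Field K] [Fintype m] [Fintype n] [DecidableEq m] [DecidableEq n]

theorem map_range_mulVecLin_transpose (P : Matrix m n K) :
    (LinearMap.range Pᵀ.mulVecLin).map (dotProductEquiv K n).toLinearMap =
      (LinearMap.ker P.mulVecLin).dualAnnihilator := by
  have h : (dotProductEquiv K n).toLinearMap ∘ₗ Pᵀ.mulVecLin =
      P.mulVecLin.dualMap ∘ₗ (dotProductEquiv K m).toLinearMap := by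
    ext y x
    simp
  rw [← LinearMap.range_comp, h, LinearMap.range_comp_of_range_eq_top _ (LinearEquiv.range _),
    LinearMap.range_dualMap_eq_dualAnnihilator_ker]

theorem iSup_range_mulVecLin_transpose_eq_top_iff {ι : Type*} [Finite ι]
    (P : ι → Matrix m n K) :
    ⨆ i, LinearMap.range (P i)ᵀ.mulVecLin = ⊤ ↔ ⨅ i, LinearMap.ker (P i).mulVecLin = ⊥ := by
  rw [← Submodule.map_eq_top_iff (e := dotProductEquiv K n), Submodule.map_iSup]
  simp_rw [map_range_mulVecLin_transpose]
  rw [← Subspace.dualAnnihilator_iInf_eq, Submodule.dualAnnihilator_eq_top_iff]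

end Matrix

section SwitchedLinearSystem

variable {n m p q : ℕ} (A : Fin q → Matrix (Fin n) (Fin n) ℝ)
  (B : Fin q → Matrix (Fin n) (Fin m) ℝ) (C : Fin q → Matrix (Fin p) (Fin n) ℝ)

theorem transMat_succ_of_le (σ : ℕ → Fin q) {s t : ℕ} (h : s ≤ t) :
    transMat A σ s (t + 1) = A (σ t) * transMat A σ s t :=
  if_pos h

theorem traj_sub_traj (σ : ℕ → Fin q) (u : ℕ → Fin m → ℝ) (x₀ x₀' : Fin n → ℝ) (t : ℕ) :
    traj A B σ u x₀ t - traj A B σ u x₀' t = transMat A σ 0 t *ᵥ (x₀ - x₀') := by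
  induction t with
  | zero => simp [traj, transMat]
  | succ t ih =>
    rw [traj, traj, add_sub_add_right_eq_sub, ← mulVec_sub, ih,
      transMat_succ_of_le A σ t.zero_le, mulVec_mulVec]

def unobservableSubspace (σ : ℕ → Fin q) (T : ℕ) : Submodule ℝ (Fin n → ℝ) :=
  ⨅ t : Fin T, LinearMap.ker (C (σ t) * transMat A σ 0 t).mulVecLin

theorem mem_unobservableSubspace_iff (σ : ℕ → Fin q) (T : ℕ) (x : Fin n → ℝ) :
    x ∈ unobservableSubspace A C σ T ↔ ∀ t < T, C (σ t) *ᵥ (transMat A σ 0 t *ᵥ x) = 0 := by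
  simp [unobservableSubspace, Submodule.mem_iInf, Fin.forall_iff]

theorem outputs_eq_iff_sub_mem_unobservableSubspace (σ : ℕ → Fin q) (u : ℕ → Fin m → ℝ)
    (x₀ x₀' : Fin n → ℝ) (T : ℕ) :
    (∀ t < T, C (σ t) *ᵥ traj A B σ u x₀ t = C (σ t) *ᵥ traj A B σ u x₀' t) ↔
      x₀ - x₀' ∈ unobservableSubspace A C σ T := by
  simp_rw [mem_unobservableSubspace_iff, ← traj_sub_traj A B σ u, mulVec_sub, sub_eq_zero]

theorem observableSLS_iff_unobservableSubspace_eq_bot {N M : ℕ} (L : Fin M → Fin N → Fin N)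
    (R : Fin M → Fin N → Fin q) :
    ObservableSLS A B C L R ↔ ∃ T : ℕ, ∃ hT : 1 ≤ T, ∃ γ : Fin T → Fin M, ∀ θ₀ : Fin N,
      unobservableSubspace A C (switchSig L R θ₀ (extSeq hT γ)) T = ⊥ := by
  simp_rw [ObservableSLS, outputs_eq_iff_sub_mem_unobservableSubspace, Submodule.eq_bot_iff]
  refine exists₃_congr fun T hT γ => forall_congr' fun θ₀ => ⟨fun h x hx => ?_, ?_⟩
  · exact sub_zero x ▸ h 0 x 0 (by rwa [sub_zero])
  · exact fun h u x₀ x₀' hx => sub_eq_zero.mp (h _ hx)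

end SwitchedLinearSystem

-- `(A (σ 0))ᵀ * ⋯ * (A (σ (t-1)))ᵀ * (C (σ t))ᵀ = (C (σ t) * transMat A σ 0 t)ᵀ`.
theorem observability_criterion_general (n m p q N M : ℕ)
    (A : Fin q → Matrix (Fin n) (Fin n) ℝ) (B : Fin q → Matrix (Fin n) (Fin m) ℝ)
    (C : Fin q → Matrix (Fin p) (Fin n) ℝ)
    (L : Fin M → Fin N → Fin N) (R : Fin M → Fin N → Fin q) :
    ObservableSLS A B C L R ↔
      ∃ T : ℕ, ∃ hT : 1 ≤ T, ∃ γ : Fin T → Fin M, ∀ α : Fin N,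
        (⨆ t : Fin T, LinearMap.range
            (Matrix.mulVecLin
              ((transMat A (switchSig L R α (extSeq hT γ)) 0 (t : ℕ))ᵀ *
                (C (switchSig L R α (extSeq hT γ) (t : ℕ)))ᵀ))) = ⊤ := by
  simp_rw [observableSLS_iff_unobservableSubspace_eq_bot, ← transpose_mul,
    iSup_range_mulVecLin_transpose_eq_top_iff, unobservableSubspace]

/-- **Theorem 5.1 (observability criterion).** Note that
`(A (σ 0))ᵀ * ⋯ * (A (σ (t-1)))ᵀ = (A (σ (t-1)) * ⋯ * A (σ 0))ᵀ = (transMat A σ 0 t)ᵀ`. -/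
theorem observability_criterion (n m p q N M : ℕ)
    (hn : 0 < n) (hm : 0 < m) (hp : 0 < p) (hq : 0 < q) (hN : 0 < N) (hM : 0 < M)
    (A : Fin q → Matrix (Fin n) (Fin n) ℝ) (B : Fin q → Matrix (Fin n) (Fin m) ℝ)
    (C : Fin q → Matrix (Fin p) (Fin n) ℝ)
    (L : Fin M → Fin N → Fin N) (R : Fin M → Fin N → Fin q) :
    ObservableSLS A B C L R ↔
      ∃ T : ℕ, ∃ hT : 1 ≤ T, ∃ γ : Fin T → Fin M, ∀ α : Fin N,
        (⨆ t : Fin T, LinearMap.range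
            (Matrix.mulVecLin
              ((transMat A (switchSig L R α (extSeq hT γ)) 0 (t : ℕ))ᵀ *
                (C (switchSig L R α (extSeq hT γ) (t : ℕ)))ᵀ))) = ⊤ :=
  observability_criterion_general n m p q N M A B C L R
end

section
/- Remark 4.2(2): If the matrix A i is invertible for every i ∈ Fin q (i.e., the switched linear system is reversible), then the SLS under logically generated switching is reachable if and only if it is controllable. -/
/-!
For a switching signal `σ` and a horizon `T`, the states reachable from `0` and the states that
can be steered to `0` are subspaces of `ℝⁿ`, the second being the preimage of the first under
the free-motion matrix `transMat A σ 0 T`. Since `ℝⁿ` is not a countable union of proper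
subspaces (Baire) and there are only countably many finite logical input words, reachability
says that from every `θ₀` some single word makes the reachable subspace everything, and
controllability says that some single word makes the null-controllable subspace everything
from every `θ₀`.

Reachable ⇒ controllable: treat the initial logical states one at a time. Once a word steers
everything to `0` from the states already treated, let the next state move freely along it and
then append a word whose reachable subspace, from the logical state it has reached, is
everything; this cancels the free motion, while the states already at `0` stay there under zero
control. Controllable ⇒ reachable: if every `A i` is invertible, so is the free-motion matrix,
and the reachable subspace is its image of the null-controllable one.
-/

open scoped Matrix

theorem Submodule.exists_eq_top_of_iUnion_eq_univ_of_countable {𝕜 E ι : Type*}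
    [NontriviallyNormedField 𝕜] [CompleteSpace 𝕜] [NormedAddCommGroup E] [NormedSpace 𝕜 E]
    [FiniteDimensional 𝕜 E] [Countable ι] {p : ι → Submodule 𝕜 E}
    (hp : ⋃ i, (p i : Set E) = Set.univ) : ∃ i, p i = ⊤ := by
  have : CompleteSpace E := FiniteDimensional.complete 𝕜 E
  obtain ⟨i, hi⟩ := nonempty_interior_of_iUnion_of_closed
    (fun i => (p i).closed_of_finiteDimensional) hp
  exact ⟨i, (p i).eq_top_of_nonempty_interior' hi⟩

section Sequences

variable {α : Type*}

def seqAppend (T : ℕ) (f g : ℕ → α) : ℕ → α :=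
  fun t => if t < T then f t else g (t - T)

theorem seqAppend_of_lt {T t : ℕ} (f g : ℕ → α) (ht : t < T) : seqAppend T f g t = f t :=
  if_pos ht

theorem seqAppend_add (T : ℕ) (f g : ℕ → α) (t : ℕ) : seqAppend T f g (T + t) = g t := by
  simp [seqAppend]

theorem extSeq_restrict_of_lt {T t : ℕ} (hT : 0 < T) (f : ℕ → α) (ht : t < T) :
    extSeq hT (fun s : Fin T => f s) t = f t :=
  congrArg f (Nat.min_eq_left (Nat.le_pred_of_lt ht))

end Sequences

section Logic

variable {q N M : ℕ} (L : Fin M → Fin N → Fin N) (R : Fin M → Fin N → Fin q)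

theorem logicState_congr (θ₀ : Fin N) {γ γ' : ℕ → Fin M} {t : ℕ} (h : ∀ s < t, γ s = γ' s) :
    logicState L θ₀ γ t = logicState L θ₀ γ' t := by
  induction t with
  | zero => rfl
  | succ t ih =>
    simp only [logicState]
    rw [ih fun s hs => h s (by omega), h t (by omega)]

theorem switchSig_congr (θ₀ : Fin N) {γ γ' : ℕ → Fin M} {t : ℕ} (h : ∀ s < t, γ s = γ' s) :
    ∀ s < t, switchSig L R θ₀ γ s = switchSig L R θ₀ γ' s := fun s hs => by
  simp only [switchSig]
  rw [logicState_congr L θ₀ fun r hr => h r (by omega), h s hs]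

theorem logicState_add (θ₀ : Fin N) (γ : ℕ → Fin M) (T t : ℕ) :
    logicState L θ₀ γ (T + t) = logicState L (logicState L θ₀ γ T) (fun s => γ (T + s)) t := by
  induction t with
  | zero => rfl
  | succ t ih => exact congrArg (L (γ (T + t))) ih

theorem switchSig_seqAppend_of_lt (θ₀ : Fin N) {T : ℕ} (γ γ' : ℕ → Fin M) :
    ∀ s < T, switchSig L R θ₀ (seqAppend T γ γ') s = switchSig L R θ₀ γ s :=
  switchSig_congr L R θ₀ fun _ hs => seqAppend_of_lt γ γ' hs

theorem switchSig_seqAppend_add (θ₀ : Fin N) (T : ℕ) (γ γ' : ℕ → Fin M) :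
    (fun t => switchSig L R θ₀ (seqAppend T γ γ') (T + t)) =
      switchSig L R (logicState L θ₀ γ T) γ' := by
  funext t
  simp only [switchSig, logicState_add, seqAppend_add,
    logicState_congr L θ₀ fun _ hs => seqAppend_of_lt γ γ' hs]

end Logic

section Trajectories

variable {n m q : ℕ} (A : Fin q → Matrix (Fin n) (Fin n) ℝ) (B : Fin q → Matrix (Fin n) (Fin m) ℝ)

theorem traj_congr {σ σ' : ℕ → Fin q} {u u' : ℕ → Fin m → ℝ} (x : Fin n → ℝ) {t : ℕ}
    (hσ : ∀ s < t, σ s = σ' s) (hu : ∀ s < t, u s = u' s) :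
    traj A B σ u x t = traj A B σ' u' x t := by
  induction t with
  | zero => rfl
  | succ t ih =>
    simp only [traj]
    rw [ih (fun s hs => hσ s (by omega)) (fun s hs => hu s (by omega)),
      hσ t (by omega), hu t (by omega)]

theorem traj_extSeq_restrict (σ : ℕ → Fin q) (u : ℕ → Fin m → ℝ) (x : Fin n → ℝ) {T : ℕ}
    (hT : 0 < T) : traj A B σ (extSeq hT fun t : Fin T => u t) x T = traj A B σ u x T :=
  traj_congr A B x (fun _ _ => rfl) fun _ hs => extSeq_restrict_of_lt hT u hs

theorem traj_add (σ : ℕ → Fin q) (u : ℕ → Fin m → ℝ) (x : Fin n → ℝ) (T t : ℕ) :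
    traj A B σ u x (T + t) =
      traj A B (fun s => σ (T + s)) (fun s => u (T + s)) (traj A B σ u x T) t := by
  induction t with
  | zero => rfl
  | succ t ih => exact congrArg (fun y => A (σ (T + t)) *ᵥ y + B (σ (T + t)) *ᵥ u (T + t)) ih

theorem transMat_zero_succ (σ : ℕ → Fin q) (t : ℕ) :
    transMat A σ 0 (t + 1) = A (σ t) * transMat A σ 0 t :=
  if_pos t.zero_le

theorem isUnit_transMat (hA : ∀ i, IsUnit (A i)) (σ : ℕ → Fin q) (s t : ℕ) :
    IsUnit (transMat A σ s t) := by
  induction t with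
  | zero => exact isUnit_one
  | succ t ih =>
    simp only [transMat]
    split_ifs
    exacts [(hA _).mul ih, isUnit_one]

theorem traj_eq_transMat_mulVec_add (σ : ℕ → Fin q) (u : ℕ → Fin m → ℝ) (x : Fin n → ℝ)
    (t : ℕ) : traj A B σ u x t = transMat A σ 0 t *ᵥ x + traj A B σ u 0 t := by
  induction t with
  | zero => simp [traj, transMat]
  | succ t ih =>
    simp only [traj, transMat_zero_succ, ih, Matrix.mulVec_add, Matrix.mulVec_mulVec, add_assoc]

theorem traj_zero_control_add (σ : ℕ → Fin q) (u v : ℕ → Fin m → ℝ) (t : ℕ) :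
    traj A B σ (u + v) 0 t = traj A B σ u 0 t + traj A B σ v 0 t := by
  induction t with
  | zero => simp [traj]
  | succ t ih =>
    simp only [traj, ih, Pi.add_apply, Matrix.mulVec_add]
    abel

theorem traj_zero_control_smul (σ : ℕ → Fin q) (c : ℝ) (u : ℕ → Fin m → ℝ) (t : ℕ) :
    traj A B σ (c • u) 0 t = c • traj A B σ u 0 t := by
  induction t with
  | zero => simp [traj]
  | succ t ih => simp only [traj, ih, Pi.smul_apply, Matrix.mulVec_smul, smul_add]

def forcedResponse (σ : ℕ → Fin q) (T : ℕ) : (ℕ → Fin m → ℝ) →ₗ[ℝ] Fin n → ℝ where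
  toFun u := traj A B σ u 0 T
  map_add' u v := traj_zero_control_add A B σ u v T
  map_smul' c u := traj_zero_control_smul A B σ c u T

def reachableSubspace (σ : ℕ → Fin q) (T : ℕ) : Submodule ℝ (Fin n → ℝ) :=
  LinearMap.range (forcedResponse A B σ T)

def nullControllableSubspace (σ : ℕ → Fin q) (T : ℕ) : Submodule ℝ (Fin n → ℝ) :=
  (reachableSubspace A B σ T).comap (transMat A σ 0 T).mulVecLin

variable {A B}

theorem mem_reachableSubspace {σ : ℕ → Fin q} {T : ℕ} {x : Fin n → ℝ} :
    x ∈ reachableSubspace A B σ T ↔ ∃ u, traj A B σ u 0 T = x :=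
  LinearMap.mem_range

theorem mem_nullControllableSubspace {σ : ℕ → Fin q} {T : ℕ} {x : Fin n → ℝ} :
    x ∈ nullControllableSubspace A B σ T ↔ ∃ u, traj A B σ u x T = 0 := by
  have hneg (u : ℕ → Fin m → ℝ) : traj A B σ (-u) 0 T = -traj A B σ u 0 T :=
    map_neg (forcedResponse A B σ T) u
  simp only [nullControllableSubspace, Submodule.mem_comap, Matrix.mulVecLin_apply,
    mem_reachableSubspace, traj_eq_transMat_mulVec_add A B σ _ x]
  constructor
  · rintro ⟨u, hu⟩
    exact ⟨-u, by rw [hneg, hu, add_neg_cancel]⟩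
  · rintro ⟨u, hu⟩
    exact ⟨-u, by rw [hneg, neg_eq_of_add_eq_zero_left hu]⟩

theorem nullControllableSubspace_congr {σ σ' : ℕ → Fin q} {T : ℕ} (h : ∀ s < T, σ s = σ' s) :
    nullControllableSubspace A B σ T = nullControllableSubspace A B σ' T := by
  ext x
  simp only [mem_nullControllableSubspace, traj_congr A B x h fun _ _ => rfl]

theorem nullControllableSubspace_eq_top_of_reachableSubspace_eq_top {σ : ℕ → Fin q} {T : ℕ}
    (h : reachableSubspace A B σ T = ⊤) : nullControllableSubspace A B σ T = ⊤ := by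
  rw [nullControllableSubspace, h, Submodule.comap_top]

theorem reachableSubspace_eq_top_of_nullControllableSubspace_eq_top
    (hA : ∀ i, IsUnit (A i)) {σ : ℕ → Fin q} {T : ℕ}
    (h : nullControllableSubspace A B σ T = ⊤) : reachableSubspace A B σ T = ⊤ := by
  have hsurj : Function.Surjective (transMat A σ 0 T).mulVecLin :=
    Matrix.mulVec_surjective_iff_isUnit.2 (isUnit_transMat A hA σ 0 T)
  rw [← Submodule.map_comap_eq_of_surjective hsurj (reachableSubspace A B σ T)]
  rw [← nullControllableSubspace, h, Submodule.map_top, LinearMap.range_eq_top]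
  exact hsurj

theorem mem_nullControllableSubspace_add {σ : ℕ → Fin q} {T₁ T₂ : ℕ} {x : Fin n → ℝ}
    {u : ℕ → Fin m → ℝ}
    (h : traj A B σ u x T₁ ∈ nullControllableSubspace A B (fun t => σ (T₁ + t)) T₂) :
    x ∈ nullControllableSubspace A B σ (T₁ + T₂) := by
  obtain ⟨v, hv⟩ := mem_nullControllableSubspace.1 h
  refine mem_nullControllableSubspace.2 ⟨seqAppend T₁ u v, ?_⟩
  rw [traj_add, traj_congr A B x (fun _ _ => rfl) fun _ hs => seqAppend_of_lt u v hs]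
  simpa only [seqAppend_add] using hv

end Trajectories

section LogicallySwitched

variable {n m q N M : ℕ} {A : Fin q → Matrix (Fin n) (Fin n) ℝ}
  {B : Fin q → Matrix (Fin n) (Fin m) ℝ} {L : Fin M → Fin N → Fin N} {R : Fin M → Fin N → Fin q}

theorem reachableSLS_iff : ReachableSLS A B L R ↔ ∀ θ₀, ∃ T, ∃ hT : 1 ≤ T, ∃ γ : Fin T → Fin M,
    reachableSubspace A B (switchSig L R θ₀ (extSeq hT γ)) T = ⊤ := by
  constructor
  · intro h θ₀
    obtain ⟨⟨⟨T, hT⟩, γ⟩, hγ⟩ := Submodule.exists_eq_top_of_iUnion_eq_univ_of_countable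
      (p := fun i : (T : {T : ℕ // 1 ≤ T}) × (Fin T → Fin M) =>
        reachableSubspace A B (switchSig L R θ₀ (extSeq i.1.2 i.2)) i.1)
      (Set.iUnion_eq_univ_iff.2 fun x => by
        obtain ⟨T, hT, γ, u, hu⟩ := h x θ₀
        exact ⟨⟨⟨T, hT⟩, γ⟩, extSeq hT u, hu⟩)
    exact ⟨T, hT, γ, hγ⟩
  · intro h x θ₀
    obtain ⟨T, hT, γ, hγ⟩ := h θ₀
    obtain ⟨u, hu⟩ := mem_reachableSubspace.1 (hγ ▸ Submodule.mem_top : x ∈ _)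
    exact ⟨T, hT, γ, fun t => u t, (traj_extSeq_restrict A B _ u 0 hT).trans hu⟩

theorem controllableSLS_iff : ControllableSLS A B L R ↔ ∃ T, ∃ hT : 1 ≤ T, ∃ γ : Fin T → Fin M,
    ∀ θ₀, nullControllableSubspace A B (switchSig L R θ₀ (extSeq hT γ)) T = ⊤ := by
  constructor
  · intro h
    obtain ⟨⟨⟨T, hT⟩, γ⟩, hγ⟩ := Submodule.exists_eq_top_of_iUnion_eq_univ_of_countable
      (p := fun i : (T : {T : ℕ // 1 ≤ T}) × (Fin T → Fin M) =>
        ⨅ θ₀, nullControllableSubspace A B (switchSig L R θ₀ (extSeq i.1.2 i.2)) i.1)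
      (Set.iUnion_eq_univ_iff.2 fun x => by
        obtain ⟨T, hT, γ, hγ⟩ := h x
        refine ⟨⟨⟨T, hT⟩, γ⟩, Submodule.mem_iInf _ |>.2 fun θ₀ => ?_⟩
        obtain ⟨u, hu⟩ := hγ θ₀
        exact mem_nullControllableSubspace.2 ⟨extSeq hT u, hu⟩)
    exact ⟨T, hT, γ, iInf_eq_top.1 hγ⟩
  · rintro ⟨T, hT, γ, hγ⟩ x
    refine ⟨T, hT, γ, fun θ₀ => ?_⟩
    obtain ⟨u, hu⟩ := mem_nullControllableSubspace.1 (hγ θ₀ ▸ Submodule.mem_top : x ∈ _)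
    exact ⟨fun t => u t, (traj_extSeq_restrict A B _ u x hT).trans hu⟩

theorem exists_seq_forall_nullControllableSubspace_eq_top (hM : 0 < M)
    (h : ∀ θ₀, ∃ T, ∃ hT : 1 ≤ T, ∃ γ : Fin T → Fin M,
      reachableSubspace A B (switchSig L R θ₀ (extSeq hT γ)) T = ⊤) (s : Finset (Fin N)) :
    ∃ T, 1 ≤ T ∧ ∃ γ : ℕ → Fin M,
      ∀ θ₀ ∈ s, nullControllableSubspace A B (switchSig L R θ₀ γ) T = ⊤ := by
  induction s using Finset.induction_on with
  | empty => exact ⟨1, le_rfl, fun _ => ⟨0, hM⟩, by simp⟩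
  | insert θ s _ ih =>
    obtain ⟨T₁, hT₁, γ₁, hγ₁⟩ := ih
    obtain ⟨T₂, hT₂, γ₂, hγ₂⟩ := h (logicState L θ γ₁ T₁)
    refine ⟨T₁ + T₂, by omega, seqAppend T₁ γ₁ (extSeq hT₂ γ₂), fun θ₀ hθ₀ => ?_⟩
    refine Submodule.eq_top_iff'.2 fun x => ?_
    rcases Finset.mem_insert.1 hθ₀ with rfl | hθ₀
    · refine mem_nullControllableSubspace_add (u := 0) ?_
      rw [switchSig_seqAppend_add,
        nullControllableSubspace_eq_top_of_reachableSubspace_eq_top hγ₂]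
      exact Submodule.mem_top
    · have hx : x ∈ nullControllableSubspace A B
          (switchSig L R θ₀ (seqAppend T₁ γ₁ (extSeq hT₂ γ₂))) T₁ := by
        rw [nullControllableSubspace_congr (switchSig_seqAppend_of_lt L R θ₀ γ₁ _), hγ₁ θ₀ hθ₀]
        exact Submodule.mem_top
      obtain ⟨u, hu⟩ := mem_nullControllableSubspace.1 hx
      exact mem_nullControllableSubspace_add (hu ▸ Submodule.zero_mem _)

end LogicallySwitched

theorem reachable_iff_controllable_of_invertible_general (n m q N M : ℕ)
    (hM : 0 < M)
    (A : Fin q → Matrix (Fin n) (Fin n) ℝ) (B : Fin q → Matrix (Fin n) (Fin m) ℝ)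
    (L : Fin M → Fin N → Fin N) (R : Fin M → Fin N → Fin q)
    (hA : ∀ i : Fin q, IsUnit (A i)) :
    ReachableSLS A B L R ↔ ControllableSLS A B L R := by
  rw [reachableSLS_iff, controllableSLS_iff]
  constructor
  · intro h
    obtain ⟨T, hT, γ, hγ⟩ := exists_seq_forall_nullControllableSubspace_eq_top hM h Finset.univ
    refine ⟨T, hT, fun t => γ t, fun θ₀ => ?_⟩
    rw [nullControllableSubspace_congr
      (switchSig_congr L R θ₀ fun _ hs => extSeq_restrict_of_lt hT γ hs)]
    exact hγ θ₀ (Finset.mem_univ θ₀)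
  · rintro ⟨T, hT, γ, hγ⟩ θ₀
    exact ⟨T, hT, γ, reachableSubspace_eq_top_of_nullControllableSubspace_eq_top hA (hγ θ₀)⟩

/-- **Remark 4.2(2).** If every `A i` is invertible (the system is reversible),
then reachability and controllability of the SLS under logically generated
switching are equivalent. -/
theorem reachable_iff_controllable_of_invertible (n m p q N M : ℕ)
    (hn : 0 < n) (hm : 0 < m) (hp : 0 < p) (hq : 0 < q) (hN : 0 < N) (hM : 0 < M)
    (A : Fin q → Matrix (Fin n) (Fin n) ℝ) (B : Fin q → Matrix (Fin n) (Fin m) ℝ)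
    (C : Fin q → Matrix (Fin p) (Fin n) ℝ)
    (L : Fin M → Fin N → Fin N) (R : Fin M → Fin N → Fin q)
    (hA : ∀ i : Fin q, IsUnit (A i)) :
    ReachableSLS A B L R ↔ ControllableSLS A B L R :=
  reachable_iff_controllable_of_invertible_general n m q N M hM A B L R hA
end

section
/- Proposition 2.2.1(2)-(4): (a) Every entry of column j of C_ℓ is positive if and only if for every i ∈ Fin b there exists an ℓ-step input-state trajectory starting in Ω⁰ j and ending in Ωᵈ i (the network is ℓ-step input-state set reachable at Ω⁰ j). (b) Every entry of row i of C_ℓ is positive if and only if for every j ∈ Fin a there exists an ℓ-step input-state trajectory starting in Ω⁰ j and ending in Ωᵈ i (Ωᵈ i is globally ℓ-step input-state set reachable). (c) Every entry of C_ℓ is positive if and only if for every j ∈ Fin a and i ∈ Fin b there exists an ℓ-step input-state trajectory starting in Ω⁰ j and ending in Ωᵈ i. -/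
/-! Over `ℕ` (or any canonically ordered semiring without zero divisors) an entry of a matrix
product is positive iff some intermediate index makes both factors positive, so `(A ^ ℓ) i j > 0`
iff there is a walk of length `ℓ` from `j` to `i` along positive entries of `A`. For `A = 𝐋` such
walks are exactly the `ℓ`-step input-state trajectories, and the index matrices on either side of
`𝐋 ^ ℓ` only constrain the endpoints to lie in `Ω⁰ j` and `Ωᵈ i`. -/

attribute [local instance] Classical.propDecidable

/-- The input-state matrix `𝐋` of the logical control network `L`:
`𝐋 (γ', θ') (γ, θ) = 1` if `θ' = L γ θ` and `0` otherwise. -/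
def inputStateMat {M N : ℕ} (L : Fin M → Fin N → Fin N) :
    Matrix (Fin M × Fin N) (Fin M × Fin N) ℕ :=
  fun p' p => if p'.2 = L p.1 p.2 then 1 else 0

/-- The index matrix of a finite family of input-state subsets. -/
noncomputable def idxMat {M N s : ℕ} (Ω : Fin s → Set (Fin M × Fin N)) :
    Matrix (Fin M × Fin N) (Fin s) ℕ :=
  fun v j => if v ∈ Ω j then 1 else 0

/-- The `ℓ`-step input-state set reachability matrix
`C_ℓ = (P_{Ωᵈ})ᵀ * 𝐋^ℓ * P_{Ω⁰}`. -/
noncomputable def reachMat {M N a b : ℕ} (L : Fin M → Fin N → Fin N) (ℓ : ℕ)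
    (Ω0 : Fin a → Set (Fin M × Fin N)) (Ωd : Fin b → Set (Fin M × Fin N)) :
    Matrix (Fin b) (Fin a) ℕ :=
  (idxMat Ωd).transpose * (inputStateMat L) ^ ℓ * idxMat Ω0

/-- `w : Fin (ℓ+1) → Fin M × Fin N` is an `ℓ`-step input-state trajectory of the
logical control network `L`: `θ (t+1) = L (γ t) (θ t)` for all `t < ℓ`. -/
def IsISTraj {M N : ℕ} (L : Fin M → Fin N → Fin N) (ℓ : ℕ)
    (w : Fin (ℓ + 1) → Fin M × Fin N) : Prop :=
  ∀ t : Fin ℓ, (w t.succ).2 = L (w t.castSucc).1 (w t.castSucc).2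

namespace Matrix

variable {R : Type*} [CommSemiring R] [PartialOrder R] [CanonicallyOrderedAdd R] [NoZeroDivisors R]

theorem mul_apply_pos_iff {l m n : Type*} [Fintype m] (A : Matrix l m R) (B : Matrix m n R)
    (i : l) (k : n) : 0 < (A * B) i k ↔ ∃ j, 0 < A i j ∧ 0 < B j k := by
  simp [mul_apply, Finset.sum_pos_iff, CanonicallyOrderedAdd.mul_pos]

theorem pow_apply_pos_iff {ι : Type*} [Fintype ι] [DecidableEq ι] [Nontrivial R]
    (A : Matrix ι ι R) (n : ℕ) (i j : ι) :
    0 < (A ^ n) i j ↔ ∃ w : Fin (n + 1) → ι,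
      (∀ t : Fin n, 0 < A (w t.succ) (w t.castSucc)) ∧ w 0 = j ∧ w (Fin.last n) = i := by
  induction n generalizing j with
  | zero =>
    rw [pow_zero, one_apply]
    split_ifs with h <;> simp [Fin.exists_fin_succ_pi, h, eq_comm]
  | succ n ih =>
    rw [pow_succ, mul_apply_pos_iff, Fin.exists_fin_succ_pi]
    simp only [ih, Fin.forall_fin_succ, ← Fin.succ_castSucc, ← Fin.succ_last, Fin.castSucc_zero,
      Fin.cons_zero, Fin.cons_succ]
    constructor
    · rintro ⟨k, ⟨v, hA, rfl, hv⟩, hk⟩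
      exact ⟨j, v, ⟨hk, hA⟩, rfl, hv⟩
    · rintro ⟨_, v, ⟨hk, hA⟩, rfl, hv⟩
      exact ⟨v 0, ⟨v, hA, rfl, hv⟩, hk⟩

end Matrix

section InputState

variable {M N : ℕ} (L : Fin M → Fin N → Fin N)

theorem inputStateMat_apply_pos_iff (p' p : Fin M × Fin N) :
    0 < inputStateMat L p' p ↔ p'.2 = L p.1 p.2 := by
  unfold inputStateMat
  split_ifs <;> simp [*]

theorem idxMat_apply_pos_iff {s : ℕ} (Ω : Fin s → Set (Fin M × Fin N)) (v : Fin M × Fin N)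
    (j : Fin s) : 0 < idxMat Ω v j ↔ v ∈ Ω j := by
  unfold idxMat
  split_ifs <;> simp [*]

theorem inputStateMat_pow_apply_pos_iff (ℓ : ℕ) (p' p : Fin M × Fin N) :
    0 < (inputStateMat L ^ ℓ) p' p ↔
      ∃ w : Fin (ℓ + 1) → Fin M × Fin N, IsISTraj L ℓ w ∧ w 0 = p ∧ w (Fin.last ℓ) = p' := by
  simp only [Matrix.pow_apply_pos_iff, inputStateMat_apply_pos_iff, IsISTraj]

theorem reachMat_pos_iff {a b : ℕ} (ℓ : ℕ) (Ω0 : Fin a → Set (Fin M × Fin N))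
    (Ωd : Fin b → Set (Fin M × Fin N)) (i : Fin b) (j : Fin a) :
    0 < reachMat L ℓ Ω0 Ωd i j ↔
      ∃ w : Fin (ℓ + 1) → Fin M × Fin N,
        IsISTraj L ℓ w ∧ w 0 ∈ Ω0 j ∧ w (Fin.last ℓ) ∈ Ωd i := by
  simp only [reachMat, Matrix.mul_apply_pos_iff, Matrix.transpose_apply, idxMat_apply_pos_iff,
    inputStateMat_pow_apply_pos_iff]
  constructor
  · rintro ⟨p, ⟨p', hp', w, hw, rfl, rfl⟩, hp⟩
    exact ⟨w, hw, hp, hp'⟩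
  · rintro ⟨w, hw, h0, hl⟩
    exact ⟨w 0, ⟨w (Fin.last ℓ), hl, w, hw, rfl, rfl⟩, h0⟩

end InputState

theorem reachMat_col_row_all_pos_iff_general (M N ℓ a b : ℕ)
    (L : Fin M → Fin N → Fin N)
    (Ω0 : Fin a → Set (Fin M × Fin N)) (Ωd : Fin b → Set (Fin M × Fin N)) :
    (∀ j : Fin a,
      ((∀ i : Fin b, 0 < reachMat L ℓ Ω0 Ωd i j) ↔
        ∀ i : Fin b, ∃ w : Fin (ℓ + 1) → Fin M × Fin N,
          IsISTraj L ℓ w ∧ w 0 ∈ Ω0 j ∧ w (Fin.last ℓ) ∈ Ωd i)) ∧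
    (∀ i : Fin b,
      ((∀ j : Fin a, 0 < reachMat L ℓ Ω0 Ωd i j) ↔
        ∀ j : Fin a, ∃ w : Fin (ℓ + 1) → Fin M × Fin N,
          IsISTraj L ℓ w ∧ w 0 ∈ Ω0 j ∧ w (Fin.last ℓ) ∈ Ωd i)) ∧
    ((∀ (i : Fin b) (j : Fin a), 0 < reachMat L ℓ Ω0 Ωd i j) ↔
      ∀ (j : Fin a) (i : Fin b), ∃ w : Fin (ℓ + 1) → Fin M × Fin N,
        IsISTraj L ℓ w ∧ w 0 ∈ Ω0 j ∧ w (Fin.last ℓ) ∈ Ωd i) := by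
  simp only [reachMat_pos_iff, implies_true, true_and]
  exact forall_comm

/-- **Proposition 2.2.1(2)-(4).** (a) column `j` of `C_ℓ` is everywhere positive iff
the network is `ℓ`-step input-state set reachable at `Ω⁰ j`; (b) row `i` of `C_ℓ` is
everywhere positive iff `Ωᵈ i` is globally `ℓ`-step input-state set reachable;
(c) `C_ℓ` is everywhere positive iff the network is `ℓ`-step input-state set
reachable from every `Ω⁰ j` to every `Ωᵈ i`. -/
theorem reachMat_col_row_all_pos_iff (M N ℓ a b : ℕ)
    (hM : 0 < M) (hN : 0 < N) (hℓ : 1 ≤ ℓ)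
    (L : Fin M → Fin N → Fin N)
    (Ω0 : Fin a → Set (Fin M × Fin N)) (Ωd : Fin b → Set (Fin M × Fin N)) :
    (∀ j : Fin a,
      ((∀ i : Fin b, 0 < reachMat L ℓ Ω0 Ωd i j) ↔
        ∀ i : Fin b, ∃ w : Fin (ℓ + 1) → Fin M × Fin N,
          IsISTraj L ℓ w ∧ w 0 ∈ Ω0 j ∧ w (Fin.last ℓ) ∈ Ωd i)) ∧
    (∀ i : Fin b,
      ((∀ j : Fin a, 0 < reachMat L ℓ Ω0 Ωd i j) ↔
        ∀ j : Fin a, ∃ w : Fin (ℓ + 1) → Fin M × Fin N,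
          IsISTraj L ℓ w ∧ w 0 ∈ Ω0 j ∧ w (Fin.last ℓ) ∈ Ωd i)) ∧
    ((∀ (i : Fin b) (j : Fin a), 0 < reachMat L ℓ Ω0 Ωd i j) ↔
      ∀ (j : Fin a) (i : Fin b), ∃ w : Fin (ℓ + 1) → Fin M × Fin N,
        IsISTraj L ℓ w ∧ w 0 ∈ Ω0 j ∧ w (Fin.last ℓ) ∈ Ωd i) :=
  reachMat_col_row_all_pos_iff_general M N ℓ a b L Ω0 Ωd
end

section
/- Theorem on finite reference signal tracking (Theorem for σ-tracking): The reference signal sequence σ_ref is trackable from θ₀ if and only if every one of the sets S_0, S_1, …, S_τ is nonempty, where the sets S_t ⊆ Fin M × Fin N are defined recursively by S_0 = {(γ, θ₀) : γ ∈ Fin M, R γ θ₀ = σ_ref 0} and S_{t+1} = {(γ, θ) : R γ θ = σ_ref (t+1) and there exists (γ', θ') ∈ S_t with θ = L γ' θ'}. -/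
/-- The reference sequence `σref : Fin (τ+1) → Fin q` is trackable from `θ₀` if
some logical input sequence `γ` generates exactly the signals `σref t`, `t ≤ τ`. -/
def Trackable {q N M : ℕ} (L : Fin M → Fin N → Fin N) (R : Fin M → Fin N → Fin q)
    (θ₀ : Fin N) (τ : ℕ) (σref : Fin (τ + 1) → Fin q) : Prop :=
  ∃ γ : Fin (τ + 1) → Fin M, ∀ t : Fin (τ + 1),
    R (γ t) (logicState L θ₀ (extSeq (Nat.succ_pos τ) γ) (t : ℕ)) = σref t

/-- The recursively defined sets `S_t` of input-state pairs compatible with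
tracking the reference signal: `S_0 = {(γ, θ₀) : R γ θ₀ = σref 0}` and
`S_{t+1} = {(γ, θ) : R γ θ = σref (t+1), ∃ (γ', θ') ∈ S_t, θ = L γ' θ'}`,
where `σ' : ℕ → Fin q` is the reference signal (as a sequence). -/
def trackSet {q N M : ℕ} (L : Fin M → Fin N → Fin N) (R : Fin M → Fin N → Fin q)
    (θ₀ : Fin N) (σ' : ℕ → Fin q) : ℕ → Set (Fin M × Fin N)
  | 0 => {p | p.2 = θ₀ ∧ R p.1 p.2 = σ' 0}
  | t + 1 => {p | R p.1 p.2 = σ' (t + 1) ∧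
      ∃ p' ∈ trackSet L R θ₀ σ' t, p.2 = L p'.1 p'.2}


lemma extSeq_of_lt {α : Type*} {T : ℕ} (hT : 0 < T) (γ : Fin T → α) {t : ℕ} (ht : t < T) :
    extSeq hT γ t = γ ⟨t, ht⟩ := by
  simp only [extSeq]
  congr
  omega

section logicState

variable {N M : ℕ} (L : Fin M → Fin N → Fin N) (θ₀ : Fin N)

lemma logicState_congr_s11 {γ₁ γ₂ : ℕ → Fin M} :
    ∀ {n : ℕ}, (∀ t < n, γ₁ t = γ₂ t) → logicState L θ₀ γ₁ n = logicState L θ₀ γ₂ n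
  | 0, _ => rfl
  | n + 1, h => by
    rw [logicState, logicState, h n n.lt_succ_self,
      logicState_congr_s11 fun t ht => h t (ht.trans n.lt_succ_self)]

lemma logicState_update_of_le (γ : ℕ → Fin M) {m n : ℕ} (a : Fin M) (h : n ≤ m) :
    logicState L θ₀ (Function.update γ m a) n = logicState L θ₀ γ n :=
  logicState_congr_s11 L θ₀ fun t ht => Function.update_of_ne (by omega : t ≠ m) a γ

end logicState

section trackSet

variable {q N M : ℕ} (L : Fin M → Fin N → Fin N) (R : Fin M → Fin N → Fin q) (θ₀ : Fin N)
  (σ' : ℕ → Fin q)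

lemma mem_trackSet_of_tracks (γ : ℕ → Fin M) :
    ∀ {n : ℕ}, (∀ t ≤ n, R (γ t) (logicState L θ₀ γ t) = σ' t) →
      (γ n, logicState L θ₀ γ n) ∈ trackSet L R θ₀ σ' n
  | 0, h => ⟨rfl, h 0 le_rfl⟩
  | n + 1, h => ⟨h (n + 1) le_rfl, _, mem_trackSet_of_tracks γ fun t ht => h t (by omega), rfl⟩

lemma exists_tracks_of_mem_trackSet :
    ∀ {n : ℕ} {p : Fin M × Fin N}, p ∈ trackSet L R θ₀ σ' n →
      ∃ γ : ℕ → Fin M, γ n = p.1 ∧ logicState L θ₀ γ n = p.2 ∧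
        ∀ t ≤ n, R (γ t) (logicState L θ₀ γ t) = σ' t
  | 0, p, ⟨hθ, hR⟩ => ⟨fun _ => p.1, rfl, hθ.symm, fun t ht => by
      obtain rfl : t = 0 := Nat.le_zero.1 ht
      rwa [← hθ]⟩
  | n + 1, p, ⟨hR, p', hp', hθ⟩ => by
    obtain ⟨γ, hγn, hθn, hγ⟩ := exists_tracks_of_mem_trackSet hp'
    have hstate : logicState L θ₀ (Function.update γ (n + 1) p.1) (n + 1) = p.2 := by
      rw [logicState, logicState_update_of_le L θ₀ γ p.1 n.le_succ,
        Function.update_of_ne n.succ_ne_self.symm, hγn, hθn, hθ]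
    refine ⟨Function.update γ (n + 1) p.1, Function.update_self _ _ _, hstate, fun t ht => ?_⟩
    rcases Nat.le_succ_iff.1 ht with ht | rfl
    · rw [logicState_update_of_le L θ₀ γ p.1 (ht.trans n.le_succ),
        Function.update_of_ne (by omega)]
      exact hγ t ht
    · rwa [hstate, Function.update_self]

lemma trackSet_nonempty_iff_exists_tracks (n : ℕ) :
    (trackSet L R θ₀ σ' n).Nonempty ↔
      ∃ γ : ℕ → Fin M, ∀ t ≤ n, R (γ t) (logicState L θ₀ γ t) = σ' t :=
  ⟨fun ⟨_, hp⟩ => (exists_tracks_of_mem_trackSet L R θ₀ σ' hp).imp fun _ h => h.2.2,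
    fun ⟨γ, hγ⟩ => ⟨_, mem_trackSet_of_tracks L R θ₀ σ' γ hγ⟩⟩

end trackSet

lemma trackable_iff_exists_tracks {q N M : ℕ} (L : Fin M → Fin N → Fin N)
    (R : Fin M → Fin N → Fin q) (θ₀ : Fin N) (τ : ℕ) (σref : Fin (τ + 1) → Fin q) :
    Trackable L R θ₀ τ σref ↔ ∃ γ : ℕ → Fin M,
      ∀ t ≤ τ, R (γ t) (logicState L θ₀ γ t) = extSeq (Nat.succ_pos τ) σref t := by
  constructor
  · rintro ⟨γ, hγ⟩
    refine ⟨extSeq (Nat.succ_pos τ) γ, fun t ht => ?_⟩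
    rw [extSeq_of_lt _ _ (Nat.lt_succ_of_le ht), extSeq_of_lt _ _ (Nat.lt_succ_of_le ht)]
    exact hγ ⟨t, _⟩
  · rintro ⟨γ, hγ⟩
    refine ⟨fun t => γ t, fun t => ?_⟩
    have hstate : logicState L θ₀ (extSeq (Nat.succ_pos τ) fun s => γ s) t =
        logicState L θ₀ γ t :=
      logicState_congr_s11 L θ₀ fun s hs => extSeq_of_lt _ _ (hs.trans t.isLt)
    rw [hstate, hγ t (Nat.lt_succ_iff.1 t.isLt), extSeq_of_lt _ _ t.isLt]

theorem trackable_iff_trackSets_nonempty_general (q N M τ : ℕ)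
    (L : Fin M → Fin N → Fin N) (R : Fin M → Fin N → Fin q)
    (θ₀ : Fin N) (σref : Fin (τ + 1) → Fin q) :
    Trackable L R θ₀ τ σref ↔
      ∀ t : Fin (τ + 1),
        (trackSet L R θ₀ (extSeq (Nat.succ_pos τ) σref) (t : ℕ)).Nonempty := by
  simp only [trackable_iff_exists_tracks, trackSet_nonempty_iff_exists_tracks]
  constructor
  · rintro ⟨γ, hγ⟩ t
    exact ⟨γ, fun s hs => hγ s (hs.trans (Nat.lt_succ_iff.1 t.isLt))⟩
  · intro h
    exact h (Fin.last τ)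

/-- **Theorem on finite reference signal tracking (σ-tracking).** `σref` is
trackable from `θ₀` iff each of the sets `S_0, S_1, …, S_τ` is nonempty. -/
theorem trackable_iff_trackSets_nonempty (q N M τ : ℕ)
    (hq : 0 < q) (hN : 0 < N) (hM : 0 < M)
    (L : Fin M → Fin N → Fin N) (R : Fin M → Fin N → Fin q)
    (θ₀ : Fin N) (σref : Fin (τ + 1) → Fin q) :
    Trackable L R θ₀ τ σref ↔
      ∀ t : Fin (τ + 1),
        (trackSet L R θ₀ (extSeq (Nat.succ_pos τ) σref) (t : ℕ)).Nonempty :=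
  trackable_iff_trackSets_nonempty_general q N M τ L R θ₀ σref
end
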